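/- Let ν ∈ N with ⟨ν, e_i⟩ > 0 for all 1 ≤ i ≤ d, let s ≥ 1 be an integer and let 1 ≤ k ≤ d be such that φ_k(ν) ≤ s < φ_{k+1}(ν). If 1 ≤ j ≤ d and ⟨ν, e_j⟩ ≤ s, then e_j belongs to ℓ_k(ν), the ℚ-span of the summands of the algorithm vector w_k. -/

import Mathlib

open scoped BigOperators Classical

namespace QO

/-- The standard pairing `⟨ν, m⟩ = ∑ i, ν i * m i` on `ℚ^d`. -/
def pair (d : ℕ) (ν m : Fin d → ℚ) : ℚ := ∑ i, ν i * m i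

/-- `E d lam i` is the `i`-th standard basis vector of `ℚ^d` for `1 ≤ i ≤ d`,
and equals the characteristic exponent `λ_{i-d}` for `d + 1 ≤ i` (1-based indexing). -/
def E (d : ℕ) (lam : ℕ → Fin d → ℚ) (i : ℕ) : Fin d → ℚ :=
  if 1 ≤ i ∧ i ≤ d then (fun j => if (j : ℕ) = i - 1 then 1 else 0) else lam (i - d)

/-- The lattice `M_j = ℤ^d + ℤλ_1 + ⋯ + ℤλ_j`, as an additive subgroup of `ℚ^d`. -/
def Mlat (d : ℕ) (lam : ℕ → Fin d → ℚ) : ℕ → AddSubgroup (Fin d → ℚ)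
  | 0 => AddSubgroup.closure (Set.range fun i : Fin d => (fun j => if j = i then (1 : ℚ) else 0))
  | (j + 1) => Mlat d lam j ⊔ AddSubgroup.closure {lam (j + 1)}

/-- The dual lattice `N` of `M = M_g`. -/
def Ndual (d g : ℕ) (lam : ℕ → Fin d → ℚ) : Set (Fin d → ℚ) :=
  { ν | ∀ m ∈ Mlat d lam g, ∃ z : ℤ, pair d ν m = (z : ℚ) }

/-- Admissible index sets for `J_k`: `k` indices in `{1, …, d+g}`, at most one of which
exceeds `d`, whose associated vectors are linearly independent over `ℚ`. -/
def IdxOk (d g : ℕ) (lam : ℕ → Fin d → ℚ) (k : ℕ) (I : Finset ℕ) : Prop :=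
  I.card = k ∧ I ⊆ Finset.Icc 1 (d + g) ∧ (I.filter fun i => d + 1 ≤ i).card ≤ 1 ∧
    LinearIndependent ℚ (fun i : {x // x ∈ I} => E d lam i.1)

/-- The set `J_k` of sums `e_{j_1} + ⋯ + e_{j_k}`. -/
def Jset (d g : ℕ) (lam : ℕ → Fin d → ℚ) (k : ℕ) : Set (Fin d → ℚ) :=
  { w | ∃ I : Finset ℕ, IdxOk d g lam k I ∧ w = ∑ i ∈ I, E d lam i }

/-- The set `J_k`, as a finite set. -/
noncomputable def Jfin (d g : ℕ) (lam : ℕ → Fin d → ℚ) (k : ℕ) : Finset (Fin d → ℚ) :=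
  ((Finset.Icc 1 (d + g)).powerset.filter fun I => IdxOk d g lam k I).image
    fun I => ∑ i ∈ I, E d lam i

/-- The support function `ord_{J_k}(ν) = min_{w ∈ J_k} ⟨ν, w⟩`. -/
noncomputable def ordJ (d g : ℕ) (lam : ℕ → Fin d → ℚ) (k : ℕ) (ν : Fin d → ℚ) : ℚ :=
  if h : (Jfin d g lam k).Nonempty then ((Jfin d g lam k).image (pair d ν)).min' (h.image _)
  else 0

/-- `φ_k(ν) = ord_{J_k}(ν) - ord_{J_{k-1}}(ν)` (note `ord_{J_0} = 0`, hence also `φ_0 = 0`). -/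
noncomputable def phiJ (d g : ℕ) (lam : ℕ → Fin d → ℚ) (k : ℕ) (ν : Fin d → ℚ) : ℚ :=
  ordJ d g lam k ν - ordJ d g lam (k - 1) ν

/-- The sort key of the total order `≤_ν` on the indices `1, …, d+g`: sort by the value
`⟨ν, ·⟩`, breaking ties (in particular ties between an `e_i` with `i ≤ d` and a `λ_j`)
by the index, so that `e_i` is placed first. -/
noncomputable def keyIdx (d : ℕ) (lam : ℕ → Fin d → ℚ) (ν : Fin d → ℚ) (i : ℕ) : ℚ ×ₗ ℕ :=
  toLex (pair d ν (E d lam i), i)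

/-- The `≤_ν`-least element of a finite set of indices. -/
noncomputable def leastIdx (d : ℕ) (lam : ℕ → Fin d → ℚ) (ν : Fin d → ℚ) (S : Finset ℕ) : ℕ :=
  if h : S.Nonempty then (ofLex ((S.image (keyIdx d lam ν)).min' (h.image _))).2 else 0

/-- The `≤_ν`-greatest element of a finite set of indices. -/
noncomputable def greatestIdx (d : ℕ) (lam : ℕ → Fin d → ℚ) (ν : Fin d → ℚ)
    (S : Finset ℕ) : ℕ :=
  if h : S.Nonempty then (ofLex ((S.image (keyIdx d lam ν)).max' (h.image _))).2 else 0

/-- The `ℚ`-span of the vectors indexed by `I`. -/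
def spanOf (d : ℕ) (lam : ℕ → Fin d → ℚ) (I : Finset ℕ) : Submodule ℚ (Fin d → ℚ) :=
  Submodule.span ℚ ((fun i => E d lam i) '' (I : Set ℕ))

/-- `n(k)`: the index `n` such that `λ_n` is a summand of `w_k`, and `0` if there is none. -/
noncomputable def nVal (d : ℕ) (I : Finset ℕ) : ℕ :=
  if h : (I.filter fun i => d + 1 ≤ i).Nonempty then (I.filter fun i => d + 1 ≤ i).min' h - d
  else 0

/-- `t(k)`: the least `1 ≤ j ≤ g` with `λ_j ∉ ℓ_k(ν)`, and `g + 1` if there is none. -/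
noncomputable def tVal (d g : ℕ) (lam : ℕ → Fin d → ℚ) (I : Finset ℕ) : ℕ :=
  if h : ((Finset.Icc 1 g).filter fun j => lam j ∉ spanOf d lam I).Nonempty then
    ((Finset.Icc 1 g).filter fun j => lam j ∉ spanOf d lam I).min' h
  else g + 1

/-- `m(k)`: the index `m` with `({e_1, …, e_d} ∩ ℓ_k(ν)) ∖ {summands of w_k} = {e_m}`,
and `0` if this set is empty. -/
noncomputable def mVal (d : ℕ) (lam : ℕ → Fin d → ℚ) (I : Finset ℕ) : ℕ :=
  if h : (((Finset.Icc 1 d).filter fun i => E d lam i ∈ spanOf d lam I) \ I).Nonempty then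
    (((Finset.Icc 1 d).filter fun i => E d lam i ∈ spanOf d lam I) \ I).min' h
  else 0

/-- `i(k)`: the `≤_ν`-least index `1 ≤ i ≤ d + g` with `w_k + e_i ∈ J_{k+1}`. -/
noncomputable def iVal (d g : ℕ) (lam : ℕ → Fin d → ℚ) (ν : Fin d → ℚ) (k : ℕ)
    (I : Finset ℕ) : ℕ :=
  leastIdx d lam ν ((Finset.Icc 1 (d + g)).filter fun i => IdxOk d g lam (k + 1) (insert i I))

/-- One step of the algorithm, from the summands of `w_k` to the summands of `w_{k+1}`:
`a_{k+1} = w_k + e_{i(k)}` and `b_{k+1} = w_k - λ_{n(k)} + λ_{t(k)} + e_{m(k)}`; the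
candidate `b_{k+1}` is discarded when `m(k) = 0` or `t(k) = g + 1`, and otherwise
`w_{k+1} = a_{k+1}` exactly when `⟨ν, a_{k+1}⟩ ≤ ⟨ν, b_{k+1}⟩`. -/
noncomputable def step (d g : ℕ) (lam : ℕ → Fin d → ℚ) (ν : Fin d → ℚ) (k : ℕ)
    (I : Finset ℕ) : Finset ℕ :=
  let a : Finset ℕ := insert (iVal d g lam ν k I) I
  let b : Finset ℕ :=
    insert (mVal d lam I) (insert (d + tVal d g lam I)
      (if nVal d I = 0 then I else I.erase (d + nVal d I)))
  if mVal d lam I = 0 ∨ tVal d g lam I = g + 1 then a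
  else if pair d ν (∑ i ∈ a, E d lam i) ≤ pair d ν (∑ i ∈ b, E d lam i) then a else b

/-- The index sets `W ν k` of summands of the algorithm's vectors `w_k`; the vector `w_1`
is the `≤_ν`-least element of `{e_1, …, e_d, λ_1}`. -/
noncomputable def W (d g : ℕ) (lam : ℕ → Fin d → ℚ) (ν : Fin d → ℚ) : ℕ → Finset ℕ
  | 0 => ∅
  | 1 => {leastIdx d lam ν (insert (d + 1) (Finset.Icc 1 d))}
  | (k + 2) => step d g lam ν (k + 1) (W d g lam ν (k + 1))

/-- The algorithm's vector `w_k`. -/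
noncomputable def wVec (d g : ℕ) (lam : ℕ → Fin d → ℚ) (ν : Fin d → ℚ) (k : ℕ) :
    Fin d → ℚ :=
  ∑ i ∈ W d g lam ν k, E d lam i

/-- `ℓ_k(ν)`: the `ℚ`-span of the summands of `w_k`. -/
noncomputable def ellK (d g : ℕ) (lam : ℕ → Fin d → ℚ) (ν : Fin d → ℚ) (k : ℕ) :
    Submodule ℚ (Fin d → ℚ) :=
  spanOf d lam (W d g lam ν k)

/-- `ℓ_ν^s = span_ℚ{e_j : 1 ≤ j < d + t(k), ⟨ν, e_j⟩ ≤ s}`, where `k` is the index with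
`φ_k(ν) ≤ s < φ_{k+1}(ν)`. -/
noncomputable def ellS (d g : ℕ) (lam : ℕ → Fin d → ℚ) (ν : Fin d → ℚ) (s : ℚ) (k : ℕ) :
    Submodule ℚ (Fin d → ℚ) :=
  Submodule.span ℚ ((fun i => E d lam i) ''
    { i : ℕ | 1 ≤ i ∧ i < d + tVal d g lam (W d g lam ν k) ∧ pair d ν (E d lam i) ≤ s })

/-- `p(k)` (with the convention `λ_0 = 0`). -/
noncomputable def pVal (d g : ℕ) (lam : ℕ → Fin d → ℚ) (ν : Fin d → ℚ) (s : ℚ)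
    (k : ℕ) : ℕ :=
  if nVal d (W d g lam ν k) = 0 then
    if h : ((Finset.Icc 0 g).filter fun j =>
        pair d ν (if j = 0 then (0 : Fin d → ℚ) else lam j) ≤ s).Nonempty then
      ((Finset.Icc 0 g).filter fun j =>
        pair d ν (if j = 0 then (0 : Fin d → ℚ) else lam j) ≤ s).max' h
    else 0
  else
    (insert (nVal d (W d g lam ν k))
      ((Finset.Ioo (nVal d (W d g lam ν k)) (tVal d g lam (W d g lam ν k))).filter fun j =>
        mVal d lam (W d g lam ν k) ≠ 0 ∧
          pair d ν (E d lam (mVal d lam (W d g lam ν k)) - lam (nVal d (W d g lam ν k)) + lam j)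
            ≤ s)).max' (Finset.insert_nonempty _ _)

/-- `q_η`: the index of the `≤_ν`-greatest element of `{e_1, …, e_d} ∩ ℓ(η)`, where
`ℓ(η) = span_ℚ{e_i : η_i ≠ 0}`. -/
noncomputable def qIdx (d : ℕ) (lam : ℕ → Fin d → ℚ) (ν η : Fin d → ℚ) : ℕ :=
  greatestIdx d lam ν ((Finset.Icc 1 d).filter fun i => pair d η (E d lam i) ≠ 0)


/-!
By induction on `k`, the algorithm is greedy-optimal: `w_k` minimises `⟨ν, ·⟩` on `J_k`, so
`⟨ν, w_k⟩ = ord_{J_k}(ν)`. For the inductive step take any `S ∈ J_{k+1}`. If some summand `u` of `S`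
can be added to `w_k` within `J_{k+1}`, then `⟨ν, a_{k+1}⟩ ≤ ⟨ν, e_u⟩ + ⟨ν, w_k⟩ ≤ ⟨ν, S⟩`, since
`S - e_u ∈ J_k`. Otherwise a dimension count shows that `S = λ_j + ∑_{e_i ∈ ℓ_k(ν)} e_i`, that
`w_k` contains some `λ_n`, and that `b_{k+1} = λ_{t(k)} + ∑_{e_i ∈ ℓ_k(ν)} e_i` with `t(k) ≤ j`;
monotonicity of the `λ`'s gives `⟨ν, b_{k+1}⟩ ≤ ⟨ν, S⟩`.

Now if `k < d` and `e_j ∉ ℓ_k(ν)`, then `w_k + e_j ∈ J_{k+1}`, whence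
`φ_{k+1}(ν) ≤ ⟨ν, e_j⟩ ≤ s`; and `ℓ_d(ν) = ℚ^d`.
-/

open Finset Module

section Vectors
variable {d : ℕ} {lam : ℕ → Fin d → ℚ} {ν : Fin d → ℚ}

lemma E_of_le {i : ℕ} (h1 : 1 ≤ i) (h2 : i ≤ d) :
    E d lam i = Pi.single (⟨i - 1, by omega⟩ : Fin d) 1 := by
  ext j
  simp [E, h1, h2, Pi.single_apply, Fin.ext_iff]

lemma E_of_lt {i : ℕ} (h : d < i) : E d lam i = lam (i - d) := if_neg (by omega)

lemma E_add {n : ℕ} (hn : 1 ≤ n) : E d lam (d + n) = lam n := by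
  rw [E_of_lt (by omega), Nat.add_sub_cancel_left]

lemma E_ne_zero_of_le {i : ℕ} (h1 : 1 ≤ i) (h2 : i ≤ d) : E d lam i ≠ 0 := by
  rw [E_of_le h1 h2]
  exact Pi.single_ne_zero_iff.mpr one_ne_zero

lemma pair_E_of_le {i : ℕ} (h1 : 1 ≤ i) (h2 : i ≤ d) :
    pair d ν (E d lam i) = ν ⟨i - 1, by omega⟩ := by
  simp [E_of_le h1 h2, pair, Pi.single_apply]

lemma nonneg_of_pair_E_pos (hpos : ∀ i, 1 ≤ i → i ≤ d → 0 < pair d ν (E d lam i)) :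
    0 ≤ ν := fun i => by
  have := hpos (i + 1) (by omega) (by omega)
  rw [pair_E_of_le (by omega) (by omega)] at this
  simpa using this.le

lemma pair_mono (hν : 0 ≤ ν) : Monotone (pair d ν) :=
  fun _ _ h => dotProduct_le_dotProduct_of_nonneg_left h hν

lemma linearIndepOn_E_Icc : LinearIndepOn ℚ (E d lam) (Set.Icc 1 d) := by
  have hinj : Function.Injective
      fun i : Set.Icc 1 d => (⟨i.1 - 1, by obtain ⟨_, _⟩ := i.2; omega⟩ : Fin d) := by
    rintro ⟨a, ha1, ha2⟩ ⟨b, hb1, hb2⟩ h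
    simp only [Fin.mk.injEq] at h
    exact Subtype.ext (by dsimp only; omega)
  rw [LinearIndepOn]
  convert (Pi.basisFun ℚ (Fin d)).linearIndependent.comp _ hinj using 1
  ext ⟨i, hi⟩ : 1
  simp [E_of_le hi.1 hi.2]

lemma finrank_spanOf_le (I : Finset ℕ) : finrank ℚ (spanOf d lam I) ≤ I.card := by
  rw [spanOf, ← coe_image]
  exact (finrank_span_finset_le_card _).trans card_image_le

lemma finrank_spanOf {I : Finset ℕ} (hI : LinearIndepOn ℚ (E d lam) (I : Set ℕ)) :
    finrank ℚ (spanOf d lam I) = I.card := by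
  rw [spanOf, Set.image_eq_range, finrank_span_eq_card hI]
  simp

lemma card_le_finrank {I : Finset ℕ} (hI : LinearIndepOn ℚ (E d lam) (I : Set ℕ))
    {V : Submodule ℚ (Fin d → ℚ)} (hV : ∀ i ∈ I, E d lam i ∈ V) : I.card ≤ finrank ℚ V := by
  rw [← finrank_spanOf hI]
  exact Submodule.finrank_mono (Submodule.span_le.mpr (by rintro _ ⟨i, hi, rfl⟩; exact hV i hi))

lemma exists_mem_E_notMem {S : Finset ℕ} (hS : LinearIndepOn ℚ (E d lam) (S : Set ℕ))
    {V : Submodule ℚ (Fin d → ℚ)} (hV : finrank ℚ V < S.card) : ∃ u ∈ S, E d lam u ∉ V := by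
  by_contra! h
  exact (card_le_finrank hS h).not_gt hV

lemma E_mem_spanOf {I : Finset ℕ} {i : ℕ} (hi : i ∈ I) : E d lam i ∈ spanOf d lam I :=
  Submodule.subset_span ⟨i, hi, rfl⟩

variable (d lam) in
noncomputable def coordIdx (V : Submodule ℚ (Fin d → ℚ)) : Finset ℕ :=
  (Icc 1 d).filter fun i => E d lam i ∈ V

lemma card_coordIdx_le (V : Submodule ℚ (Fin d → ℚ)) :
    (coordIdx d lam V).card ≤ finrank ℚ V :=
  card_le_finrank (linearIndepOn_E_Icc.mono fun i hi => by simpa using (mem_filter.mp hi).1)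
    (fun _ hi => (mem_filter.mp hi).2)

lemma spanOf_coordIdx_le (V : Submodule ℚ (Fin d → ℚ)) : spanOf d lam (coordIdx d lam V) ≤ V :=
  Submodule.span_le.mpr (by rintro _ ⟨i, hi, rfl⟩; exact (mem_filter.mp hi).2)

lemma exists_E_notMem_spanOf {I : Finset ℕ} (hI : I.card < d) :
    ∃ i ∈ Icc 1 d, E d lam i ∉ spanOf d lam I := by
  by_contra! h
  have hall : coordIdx d lam (spanOf d lam I) = Icc 1 d := filter_true_of_mem h
  have := (card_coordIdx_le (lam := lam) (spanOf d lam I)).trans (finrank_spanOf_le I)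
  rw [hall, Nat.card_Icc] at this
  omega

end Vectors

section Admissible
variable {d g k : ℕ} {lam : ℕ → Fin d → ℚ} {ν : Fin d → ℚ} {I S : Finset ℕ}

lemma idxOk_iff : IdxOk d g lam k I ↔ I.card = k ∧ I ⊆ Icc 1 (d + g) ∧
    (I.filter fun i => d + 1 ≤ i).card ≤ 1 ∧ LinearIndepOn ℚ (E d lam) (I : Set ℕ) :=
  Iff.rfl

lemma IdxOk.linearIndepOn (h : IdxOk d g lam k I) : LinearIndepOn ℚ (E d lam) (I : Set ℕ) :=
  h.2.2.2

lemma IdxOk.eq_of_lt_of_lt (h : IdxOk d g lam k I) {x y : ℕ} (hx : x ∈ I) (hy : y ∈ I)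
    (hdx : d < x) (hdy : d < y) : x = y :=
  card_le_one.mp h.2.2.1 x (mem_filter.mpr ⟨hx, hdx⟩) y (mem_filter.mpr ⟨hy, hdy⟩)

lemma idxOk_empty : IdxOk d g lam 0 ∅ :=
  idxOk_iff.mpr ⟨rfl, empty_subset _, by simp, by simp⟩

lemma idxOk_of_subset_Icc (hI : I ⊆ Icc 1 d) : IdxOk d g lam I.card I := by
  have hsmall : ∀ x ∈ I, 1 ≤ x ∧ x ≤ d := fun x hx => mem_Icc.mp (hI hx)
  refine idxOk_iff.mpr ⟨rfl, fun x hx => mem_Icc.mpr ⟨(hsmall x hx).1, by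
    have := (hsmall x hx).2; omega⟩, ?_, linearIndepOn_E_Icc.mono fun x hx => hsmall x hx⟩
  rw [filter_false_of_mem fun x hx => by have := (hsmall x hx).2; omega]
  simp

lemma IdxOk.insert_of_notMem_spanOf (h : IdxOk d g lam k I) {i : ℕ} (hi : i ∈ Icc 1 (d + g))
    (hsp : E d lam i ∉ spanOf d lam I) (hbig : d < i → ∀ x ∈ I, x ≤ d) :
    IdxOk d g lam (k + 1) (insert i I) := by
  have hiI : i ∉ I := fun h' => hsp (E_mem_spanOf h')
  refine idxOk_iff.mpr ⟨by rw [card_insert_of_notMem hiI, h.1], insert_subset hi h.2.1, ?_, ?_⟩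
  · rw [filter_insert]
    split_ifs with hdi
    · rw [filter_false_of_mem fun x hx => by have := hbig hdi x hx; omega]
      simp
    · exact h.2.2.1
  · rw [coe_insert]
    exact h.linearIndepOn.insert hsp

lemma IdxOk.erase (h : IdxOk d g lam (k + 1) S) {u : ℕ} (hu : u ∈ S) :
    IdxOk d g lam k (S.erase u) :=
  idxOk_iff.mpr ⟨by rw [card_erase_of_mem hu, h.1, Nat.add_sub_cancel],
    (erase_subset u S).trans h.2.1,
    (card_le_card (filter_subset_filter _ (erase_subset u S))).trans h.2.2.1,
    h.linearIndepOn.mono (by simp)⟩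

lemma IdxOk.spanOf_eq_top (h : IdxOk d g lam d I) : spanOf d lam I = ⊤ :=
  Submodule.eq_top_of_finrank_eq (by rw [finrank_spanOf h.linearIndepOn, h.1, finrank_fin_fun])

variable (d lam ν) in
noncomputable def weight (I : Finset ℕ) : ℚ := ∑ i ∈ I, pair d ν (E d lam i)

lemma weight_insert {u : ℕ} (hu : u ∉ I) :
    weight d lam ν (insert u I) = pair d ν (E d lam u) + weight d lam ν I :=
  sum_insert hu

lemma add_weight_erase {u : ℕ} (hu : u ∈ I) :
    pair d ν (E d lam u) + weight d lam ν (I.erase u) = weight d lam ν I :=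
  add_sum_erase I (fun i => pair d ν (E d lam i)) hu

lemma pair_sum_E (I : Finset ℕ) : pair d ν (∑ i ∈ I, E d lam i) = weight d lam ν I :=
  dotProduct_sum ν I (E d lam)

variable (d g lam ν) in
def IsMinimal (k : ℕ) (I : Finset ℕ) : Prop :=
  IdxOk d g lam k I ∧ ∀ J, IdxOk d g lam k J → weight d lam ν I ≤ weight d lam ν J

lemma ordJ_le (h : IdxOk d g lam k I) : ordJ d g lam k ν ≤ weight d lam ν I := by
  have hmem : ∑ i ∈ I, E d lam i ∈ Jfin d g lam k :=
    mem_image.mpr ⟨I, mem_filter.mpr ⟨mem_powerset.mpr h.2.1, h⟩, rfl⟩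
  rw [ordJ, dif_pos ⟨_, hmem⟩, ← pair_sum_E]
  exact min'_le _ _ (mem_image_of_mem _ hmem)

lemma IsMinimal.ordJ_eq (h : IsMinimal d g lam ν k I) : ordJ d g lam k ν = weight d lam ν I := by
  refine le_antisymm (ordJ_le h.1) ?_
  have hne : (Jfin d g lam k).Nonempty :=
    ⟨_, mem_image.mpr ⟨I, mem_filter.mpr ⟨mem_powerset.mpr h.1.2.1, h.1⟩, rfl⟩⟩
  rw [ordJ, dif_pos hne]
  obtain ⟨_, hw, hmin⟩ := mem_image.mp (min'_mem _ (hne.image (pair d ν)))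
  obtain ⟨J, hJ, rfl⟩ := mem_image.mp hw
  rw [← hmin, pair_sum_E]
  exact h.2 J (mem_filter.mp hJ).2

lemma leastIdx_spec (hS : S.Nonempty) :
    leastIdx d lam ν S ∈ S ∧
      ∀ i ∈ S, pair d ν (E d lam (leastIdx d lam ν S)) ≤ pair d ν (E d lam i) := by
  obtain ⟨s, hs, hkey⟩ := mem_image.mp (min'_mem _ (hS.image (keyIdx d lam ν)))
  have hleast : leastIdx d lam ν S = s := by
    rw [leastIdx, dif_pos hS, ← hkey]
    rfl
  refine ⟨hleast ▸ hs, fun i hi => ?_⟩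
  rw [hleast]
  exact Prod.Lex.monotone_fst _ _ (hkey ▸ min'_le _ _ (mem_image_of_mem _ hi))

end Admissible

section Step
variable {d g k : ℕ} {lam : ℕ → Fin d → ℚ} {ν : Fin d → ℚ} {I : Finset ℕ}

lemma nVal_eq (hI : IdxOk d g lam k I) {x : ℕ} (hx : x ∈ I) (hdx : d < x) :
    nVal d I = x - d := by
  have hne : (I.filter fun i => d + 1 ≤ i).Nonempty := ⟨x, mem_filter.mpr ⟨hx, hdx⟩⟩
  obtain ⟨hmem, hbig⟩ := mem_filter.mp (min'_mem _ hne)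
  rw [nVal, dif_pos hne, hI.eq_of_lt_of_lt hmem hx hbig hdx]

lemma tVal_spec (ht : tVal d g lam I ≠ g + 1) :
    tVal d g lam I ∈ Icc 1 g ∧ lam (tVal d g lam I) ∉ spanOf d lam I := by
  unfold tVal at ht ⊢
  split_ifs at ht ⊢ with hne
  · exact mem_filter.mp (min'_mem _ hne)
  · exact absurd rfl ht

lemma one_le_tVal : 1 ≤ tVal d g lam I := by
  unfold tVal
  split_ifs with hne
  · exact (mem_Icc.mp (mem_filter.mp (min'_mem _ hne)).1).1
  · omega

lemma tVal_le {j : ℕ} (hj : j ∈ Icc 1 g) (hjI : lam j ∉ spanOf d lam I) :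
    tVal d g lam I ≤ j := by
  have hmem : j ∈ (Icc 1 g).filter fun j => lam j ∉ spanOf d lam I := mem_filter.mpr ⟨hj, hjI⟩
  rw [tVal, dif_pos ⟨j, hmem⟩]
  exact min'_le _ _ hmem

lemma mVal_mem (hm : mVal d lam I ≠ 0) :
    mVal d lam I ∈ coordIdx d lam (spanOf d lam I) \ I := by
  unfold mVal at hm ⊢
  split_ifs at hm ⊢ with hne
  · exact min'_mem _ hne
  · exact absurd rfl hm

lemma mVal_ne_zero (hne : (coordIdx d lam (spanOf d lam I) \ I).Nonempty) :
    mVal d lam I ≠ 0 := by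
  have hpos := (mem_Icc.mp (mem_filter.mp (mem_sdiff.mp (min'_mem _ hne)).1).1).1
  have hmin : mVal d lam I = (coordIdx d lam (spanOf d lam I) \ I).min' hne := dif_pos hne
  rw [hmin]
  exact Nat.one_le_iff_ne_zero.mp hpos

lemma IdxOk.exists_exchange (hI : IdxOk d g lam k I) (hm : mVal d lam I ≠ 0) :
    ∃ x ∈ I, d < x ∧
      insert (mVal d lam I) (I.erase x) = coordIdx d lam (spanOf d lam I) := by
  obtain ⟨hmF, hmI⟩ := mem_sdiff.mp (mVal_mem hm)
  have hF : (coordIdx d lam (spanOf d lam I)).card ≤ k :=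
    (card_coordIdx_le _).trans (hI.1 ▸ finrank_spanOf_le I)
  have hsmall : ∀ x ∈ I, x ≤ d → x ∈ coordIdx d lam (spanOf d lam I) := fun x hx hxd =>
    mem_filter.mpr ⟨mem_Icc.mpr ⟨(mem_Icc.mp (hI.2.1 hx)).1, hxd⟩, E_mem_spanOf hx⟩
  obtain ⟨x, hxI, hdx⟩ : ∃ x ∈ I, d < x := by
    by_contra! h
    have := card_le_card (insert_subset hmF fun x hx => hsmall x hx (h x hx))
    rw [card_insert_of_notMem hmI, hI.1] at this
    omega
  refine ⟨x, hxI, hdx, eq_of_subset_of_card_le ?_ ?_⟩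
  · refine insert_subset hmF fun y hy => hsmall y (mem_of_mem_erase hy) ?_
    by_contra hdy
    exact ne_of_mem_erase hy (hI.eq_of_lt_of_lt (mem_of_mem_erase hy) hxI (by omega) hdx)
  · have := card_pos.mpr ⟨x, hxI⟩
    rw [card_insert_of_notMem fun h => hmI (mem_of_mem_erase h), card_erase_of_mem hxI, hI.1]
    omega

-- `addCand` and `exchangeCand` are the candidates `a_{k+1}` and `b_{k+1}` for `w_{k+1}`.
variable (d g lam ν) in
noncomputable def addCand (k : ℕ) (I : Finset ℕ) : Finset ℕ := insert (iVal d g lam ν k I) I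

variable (d g lam) in
noncomputable def exchangeCand (I : Finset ℕ) : Finset ℕ :=
  insert (mVal d lam I)
    (insert (d + tVal d g lam I) (if nVal d I = 0 then I else I.erase (d + nVal d I)))

lemma step_eq (I : Finset ℕ) : step d g lam ν k I =
    if mVal d lam I = 0 ∨ tVal d g lam I = g + 1 then addCand d g lam ν k I
    else if weight d lam ν (addCand d g lam ν k I) ≤ weight d lam ν (exchangeCand d g lam I)
      then addCand d g lam ν k I else exchangeCand d g lam I := by
  simp only [step, pair_sum_E]
  rfl

lemma weight_step_le_addCand (I : Finset ℕ) :
    weight d lam ν (step d g lam ν k I) ≤ weight d lam ν (addCand d g lam ν k I) := by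
  rw [step_eq]
  split_ifs <;> linarith

lemma weight_step_le_exchangeCand {I : Finset ℕ} (hm : mVal d lam I ≠ 0)
    (ht : tVal d g lam I ≠ g + 1) :
    weight d lam ν (step d g lam ν k I) ≤ weight d lam ν (exchangeCand d g lam I) := by
  rw [step_eq, if_neg (by tauto)]
  split_ifs <;> linarith

lemma IdxOk.idxOk_addCand (hI : IdxOk d g lam k I) (hk : k < d) :
    IdxOk d g lam (k + 1) (addCand d g lam ν k I) := by
  obtain ⟨i, hi, hiI⟩ := exists_E_notMem_spanOf (lam := lam) (hI.1.trans_lt hk)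
  have hid := mem_Icc.mp hi
  have hi' : i ∈ Icc 1 (d + g) := mem_Icc.mpr ⟨hid.1, by omega⟩
  have hne : ((Icc 1 (d + g)).filter fun i => IdxOk d g lam (k + 1) (insert i I)).Nonempty :=
    ⟨i, mem_filter.mpr ⟨hi', hI.insert_of_notMem_spanOf hi' hiI fun h => absurd h (by omega)⟩⟩
  exact (mem_filter.mp (leastIdx_spec hne).1).2

lemma pair_E_iVal_le {u : ℕ} (hu : u ∈ Icc 1 (d + g))
    (h : IdxOk d g lam (k + 1) (insert u I)) :
    pair d ν (E d lam (iVal d g lam ν k I)) ≤ pair d ν (E d lam u) :=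
  have hmem := mem_filter.mpr ⟨hu, h⟩
  (leastIdx_spec ⟨u, hmem⟩).2 u hmem

lemma IdxOk.weight_addCand (hI : IdxOk d g lam k I) (hk : k < d) :
    weight d lam ν (addCand d g lam ν k I) =
      pair d ν (E d lam (iVal d g lam ν k I)) + weight d lam ν I := by
  have hnot : iVal d g lam ν k I ∉ I := fun h => by
    have := (hI.idxOk_addCand (ν := ν) hk).1
    rw [addCand, insert_eq_of_mem h, hI.1] at this
    omega
  rw [addCand, weight_insert hnot]

lemma IdxOk.exchangeCand_eq (hI : IdxOk d g lam k I) (hm : mVal d lam I ≠ 0) :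
    exchangeCand d g lam I = insert (d + tVal d g lam I) (coordIdx d lam (spanOf d lam I)) := by
  obtain ⟨x, hxI, hdx, hx⟩ := hI.exists_exchange hm
  rw [exchangeCand, nVal_eq hI hxI hdx, if_neg (by omega), Nat.add_sub_cancel' hdx.le,
    insert_comm, hx]

lemma IdxOk.card_coordIdx_spanOf (hI : IdxOk d g lam k I) (hm : mVal d lam I ≠ 0) :
    (coordIdx d lam (spanOf d lam I)).card = k := by
  obtain ⟨x, hxI, -, hx⟩ := hI.exists_exchange hm
  have hmI := (mem_sdiff.mp (mVal_mem hm)).2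
  have := hI.1 ▸ card_pos.mpr ⟨x, hxI⟩
  rw [← hx, card_insert_of_notMem fun h => hmI (mem_of_mem_erase h), card_erase_of_mem hxI, hI.1]
  omega

lemma IdxOk.idxOk_exchangeCand (hI : IdxOk d g lam k I) (hm : mVal d lam I ≠ 0)
    (ht : tVal d g lam I ≠ g + 1) : IdxOk d g lam (k + 1) (exchangeCand d g lam I) := by
  obtain ⟨htg, htI⟩ := tVal_spec ht
  have htg := mem_Icc.mp htg
  have hF := idxOk_of_subset_Icc (g := g) (lam := lam)
    (I := coordIdx d lam (spanOf d lam I)) (filter_subset _ _)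
  rw [hI.card_coordIdx_spanOf hm] at hF
  rw [hI.exchangeCand_eq hm]
  refine hF.insert_of_notMem_spanOf (mem_Icc.mpr ⟨by omega, by omega⟩) ?_
    fun _ x hx => (mem_Icc.mp (mem_filter.mp hx).1).2
  rw [E_add htg.1]
  exact fun h => htI (spanOf_coordIdx_le _ h)

lemma IdxOk.weight_exchangeCand (hI : IdxOk d g lam k I) (hm : mVal d lam I ≠ 0) :
    weight d lam ν (exchangeCand d g lam I) = pair d ν (lam (tVal d g lam I)) +
      weight d lam ν (coordIdx d lam (spanOf d lam I)) := by
  have hnot : d + tVal d g lam I ∉ coordIdx d lam (spanOf d lam I) := fun h => by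
    have := (mem_Icc.mp (mem_filter.mp h).1).2
    have := one_le_tVal (d := d) (g := g) (lam := lam) (I := I)
    omega
  rw [hI.exchangeCand_eq hm, weight_insert hnot, E_add one_le_tVal]

end Step

section Minimality
variable {d g k : ℕ} {lam : ℕ → Fin d → ℚ} {ν : Fin d → ℚ} {I S : Finset ℕ}

lemma pair_lam_le (hmono : ∀ j, 1 ≤ j → j < g → ∀ i, lam j i ≤ lam (j + 1) i) (hν : 0 ≤ ν)
    {a b : ℕ} (ha : 1 ≤ a) (hab : a ≤ b) (hb : b ≤ g) : pair d ν (lam a) ≤ pair d ν (lam b) := by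
  induction b, hab using Nat.le_induction with
  | base => exact le_rfl
  | succ b hab ih => exact (ih (by omega)).trans (pair_mono hν (hmono b (by omega) (by omega)))

lemma IsMinimal.weight_step_le_of_idxOk_insert (hI : IsMinimal d g lam ν k I) (hk : k < d)
    (hS : IdxOk d g lam (k + 1) S) {u : ℕ} (hu : u ∈ S)
    (huI : IdxOk d g lam (k + 1) (insert u I)) :
    weight d lam ν (step d g lam ν k I) ≤ weight d lam ν S :=
  calc weight d lam ν (step d g lam ν k I)
      _ ≤ weight d lam ν (addCand d g lam ν k I) := weight_step_le_addCand I
      _ = pair d ν (E d lam (iVal d g lam ν k I)) + weight d lam ν I := hI.1.weight_addCand hk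
      _ ≤ pair d ν (E d lam u) + weight d lam ν (S.erase u) :=
        add_le_add (pair_E_iVal_le (hS.2.1 hu) huI) (hI.2 _ (hS.erase hu))
      _ = weight d lam ν S := add_weight_erase hu

lemma IdxOk.weight_step_le_of_forall_not_idxOk_insert
    (hmono : ∀ j, 1 ≤ j → j < g → ∀ i, lam j i ≤ lam (j + 1) i) (hν : 0 ≤ ν)
    (hI : IdxOk d g lam k I) (hS : IdxOk d g lam (k + 1) S)
    (hSI : ∀ u ∈ S, ¬ IdxOk d g lam (k + 1) (insert u I)) :
    weight d lam ν (step d g lam ν k I) ≤ weight d lam ν S := by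
  have hrank : finrank ℚ (spanOf d lam I) ≤ k := hI.1 ▸ finrank_spanOf_le I
  obtain ⟨u, huS, huI⟩ :=
    exists_mem_E_notMem hS.linearIndepOn (V := spanOf d lam I) (by rw [hS.1]; omega)
  have hu := mem_Icc.mp (hS.2.1 huS)
  obtain ⟨hdu, x, hxI, hdx⟩ : d < u ∧ ∃ x ∈ I, d < x := by
    by_contra! h
    exact hSI u huS (hI.insert_of_notMem_spanOf (hS.2.1 huS) huI h)
  have hrest : S.erase u = coordIdx d lam (spanOf d lam I) := by
    refine eq_of_subset_of_card_le (fun i hi => ?_) ?_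
    · obtain ⟨hiu, hiS⟩ := mem_erase.mp hi
      have hid : i ≤ d := by
        by_contra hid
        exact hiu (hS.eq_of_lt_of_lt hiS huS (by omega) hdu)
      refine mem_filter.mpr ⟨mem_Icc.mpr ⟨(mem_Icc.mp (hS.2.1 hiS)).1, hid⟩, ?_⟩
      by_contra hiI
      exact hSI i hiS (hI.insert_of_notMem_spanOf (hS.2.1 hiS) hiI fun h => absurd h (by omega))
    · rw [card_erase_of_mem huS, hS.1, Nat.add_sub_cancel]
      exact (card_coordIdx_le _).trans hrank
  have hm : mVal d lam I ≠ 0 := by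
    refine mVal_ne_zero (sdiff_nonempty.mpr fun hsub => ?_)
    have hFI := eq_of_subset_of_card_le hsub
      (by rw [← hrest, card_erase_of_mem huS, hS.1, hI.1, Nat.add_sub_cancel])
    have := (mem_Icc.mp (mem_filter.mp (hFI ▸ hxI)).1).2
    omega
  have htu : tVal d g lam I ≤ u - d :=
    tVal_le (mem_Icc.mpr ⟨by omega, by omega⟩) (by rwa [E_of_lt hdu] at huI)
  calc weight d lam ν (step d g lam ν k I)
      _ ≤ weight d lam ν (exchangeCand d g lam I) := weight_step_le_exchangeCand hm (by omega)
      _ = pair d ν (lam (tVal d g lam I)) + weight d lam ν (coordIdx d lam (spanOf d lam I)) :=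
        hI.weight_exchangeCand hm
      _ ≤ pair d ν (E d lam u) + weight d lam ν (S.erase u) := by
        rw [hrest, E_of_lt hdu]
        gcongr
        exact pair_lam_le hmono hν one_le_tVal htu (by omega)
      _ = weight d lam ν S := add_weight_erase huS

lemma IsMinimal.isMinimal_step (hmono : ∀ j, 1 ≤ j → j < g → ∀ i, lam j i ≤ lam (j + 1) i)
    (hν : 0 ≤ ν) (hI : IsMinimal d g lam ν k I) (hk : k < d) :
    IsMinimal d g lam ν (k + 1) (step d g lam ν k I) := by
  refine ⟨?_, fun S hS => ?_⟩
  · rw [step_eq]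
    split_ifs with hmt
    · exact hI.1.idxOk_addCand hk
    · exact hI.1.idxOk_addCand hk
    · exact hI.1.idxOk_exchangeCand (not_or.mp hmt).1 (not_or.mp hmt).2
  · by_cases h : ∃ u ∈ S, IdxOk d g lam (k + 1) (insert u I)
    · obtain ⟨u, hu, huI⟩ := h
      exact hI.weight_step_le_of_idxOk_insert hk hS hu huI
    · exact hI.1.weight_step_le_of_forall_not_idxOk_insert hmono hν hS
        fun u hu huI => h ⟨u, hu, huI⟩

lemma isMinimal_W_one (hg : 1 ≤ g) (hlam : lam 1 ≠ 0)
    (hmono : ∀ j, 1 ≤ j → j < g → ∀ i, lam j i ≤ lam (j + 1) i) (hν : 0 ≤ ν) :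
    IsMinimal d g lam ν 1 (W d g lam ν 1) := by
  obtain ⟨huT, hu⟩ := leastIdx_spec (lam := lam) (ν := ν) (insert_nonempty (d + 1) (Icc 1 d))
  set u := leastIdx d lam ν (insert (d + 1) (Icc 1 d))
  have hW1 : W d g lam ν 1 = insert u ∅ := insert_empty.symm
  have hEu : E d lam u ≠ 0 := by
    rcases mem_insert.mp huT with h | h
    · rwa [h, E_add le_rfl]
    · exact E_ne_zero_of_le (mem_Icc.mp h).1 (mem_Icc.mp h).2
  refine ⟨?_, fun J hJ => ?_⟩
  · rw [hW1]
    refine idxOk_empty.insert_of_notMem_spanOf ?_ (by simpa [spanOf] using hEu) (by simp)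
    rcases mem_insert.mp huT with h | h
    · exact mem_Icc.mpr ⟨by omega, by omega⟩
    · exact Icc_subset_Icc le_rfl (by omega) h
  · obtain ⟨x, rfl⟩ := card_eq_one.mp hJ.1
    have hx := mem_Icc.mp (hJ.2.1 (mem_singleton_self x))
    rw [hW1, insert_empty, weight, weight, sum_singleton, sum_singleton]
    rcases le_or_gt x d with hxd | hdx
    · exact hu x (mem_insert_of_mem (mem_Icc.mpr ⟨hx.1, hxd⟩))
    · calc _ ≤ pair d ν (E d lam (d + 1)) := hu _ (mem_insert_self _ _)
        _ ≤ _ := by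
          rw [E_add le_rfl, E_of_lt hdx]
          exact pair_lam_le hmono hν le_rfl (by omega) (by omega)

lemma W_succ (hk : 1 ≤ k) : W d g lam ν (k + 1) = step d g lam ν k (W d g lam ν k) := by
  obtain ⟨k, rfl⟩ := Nat.exists_eq_add_of_le' hk
  rfl

lemma isMinimal_W (hg : 1 ≤ g) (hlam : lam 1 ≠ 0)
    (hmono : ∀ j, 1 ≤ j → j < g → ∀ i, lam j i ≤ lam (j + 1) i) (hν : 0 ≤ ν)
    (hk1 : 1 ≤ k) (hkd : k ≤ d) : IsMinimal d g lam ν k (W d g lam ν k) := by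
  induction k, hk1 using Nat.le_induction with
  | base => exact isMinimal_W_one hg hlam hmono hν
  | succ k hk ih =>
    rw [W_succ hk]
    exact (ih (by omega)).isMinimal_step hmono hν (by omega)

end Minimality

theorem statement7_general (d g : ℕ) (lam : ℕ → Fin d → ℚ) (hg : 1 ≤ g)
    (hmono : ∀ j, 1 ≤ j → j < g → ∀ i, lam j i ≤ lam (j + 1) i)
    (hnotin : ∀ j, 1 ≤ j → j ≤ g → lam j ∉ Mlat d lam (j - 1))
    (ν : Fin d → ℚ)
    (hpos : ∀ i, 1 ≤ i → i ≤ d → 0 < pair d ν (E d lam i))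
    (s : ℕ) (k : ℕ) (hk1 : 1 ≤ k) (hkd : k ≤ d)
    (hks' : k < d → (s : ℚ) < phiJ d g lam (k + 1) ν) :
    ∀ j, 1 ≤ j → j ≤ d → pair d ν (E d lam j) ≤ (s : ℚ) →
      E d lam j ∈ ellK d g lam ν k := by
  intro j hj1 hjd hjs
  have hlam : lam 1 ≠ 0 := fun h => hnotin 1 le_rfl hg (h ▸ zero_mem _)
  have hW := isMinimal_W hg hlam hmono (nonneg_of_pair_E_pos hpos) hk1 hkd
  rcases hkd.lt_or_eq with hkd | rfl
  · by_contra hj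
    have hjW : j ∉ W d g lam ν k := fun h => hj (E_mem_spanOf h)
    have hext := hW.1.insert_of_notMem_spanOf (mem_Icc.mpr ⟨hj1, by omega⟩) hj (by omega)
    have hle := ordJ_le (ν := ν) hext
    rw [weight_insert hjW] at hle
    have hphi := hks' hkd
    rw [phiJ, Nat.add_sub_cancel, hW.ordJ_eq] at hphi
    linarith
  · rw [ellK, hW.1.spanOf_eq_top]
    trivial

/-- Suppose `φ_k(ν) ≤ s < φ_{k+1}(ν)`. If `1 ≤ j ≤ d` and `⟨ν, e_j⟩ ≤ s`, then `e_j`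
belongs to `ℓ_k(ν)`, the `ℚ`-span of the summands of the algorithm's vector `w_k`. -/
theorem statement7 (d g : ℕ) (lam : ℕ → Fin d → ℚ) (hd : 1 ≤ d) (hg : 1 ≤ g)
    (hnn : ∀ j, 1 ≤ j → j ≤ g → ∀ i, 0 ≤ lam j i)
    (hmono : ∀ j, 1 ≤ j → j < g → ∀ i, lam j i ≤ lam (j + 1) i)
    (hnotin : ∀ j, 1 ≤ j → j ≤ g → lam j ∉ Mlat d lam (j - 1))
    (ν : Fin d → ℚ) (hν : ν ∈ Ndual d g lam)
    (hpos : ∀ i, 1 ≤ i → i ≤ d → 0 < pair d ν (E d lam i))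
    (s : ℕ) (hs : 1 ≤ s) (k : ℕ) (hk1 : 1 ≤ k) (hkd : k ≤ d)
    (hks : phiJ d g lam k ν ≤ (s : ℚ)) (hks' : k < d → (s : ℚ) < phiJ d g lam (k + 1) ν) :
    ∀ j, 1 ≤ j → j ≤ d → pair d ν (E d lam j) ≤ (s : ℚ) →
      E d lam j ∈ ellK d g lam ν k :=
  statement7_general d g lam hg hmono hnotin ν hpos s k hk1 hkd hks'

end QO
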